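/- arXiv:2407.01382 — 2 statements merged into one kernel-verified Lean document; each statement's English description precedes it below -/
import Mathlib

section
/- For every n ≥ 3, the recursively defined tournament η_{n−3} on [2^n] admits every candidate as a possible knockout winner: w_n(η_{n−3}, Π(n)) = [2^n]. -/
/-- One knockout round: adjacent pairs play and the winners survive. -/
def roundStep (beats : ℕ → ℕ → Bool) : List ℕ → List ℕ
  | a :: b :: rest => (if beats a b then a else b) :: roundStep beats rest
  | l => l

/-- The winner of the single-elimination knockout tournament with bracket `π`
(a list of length `2^n`), pairwise challenges decided by `beats`. -/
def knockWinner (n : ℕ) (beats : ℕ → ℕ → Bool) (π : List ℕ) : ℕ :=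
  ((roundStep beats)^[n] π).headI

/-- The arrows of the tournament `η₀` on `{1,…,8}`. -/
def eta0Pairs : List (ℕ × ℕ) :=
  [(1,2),(1,3),(1,5),(2,3),(2,4),(2,6),(2,7),
   (3,4),(3,5),(3,6),(3,8),(4,1),(4,5),(4,8),
   (5,2),(5,6),(5,7),(6,1),(6,4),(6,7),(6,8),
   (7,1),(7,3),(7,4),(7,8),(8,1),(8,2),(8,5)]

/-- The tournament `η₀` on `{1,…,8}`: `eta0 i j = true` iff `i ▷ j`. -/
def eta0 (i j : ℕ) : Bool := decide ((i, j) ∈ eta0Pairs)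

/-- The recursively defined tournaments: `eta n` is the tournament `η_n` on
`{1,…,2^(n+3)}`, `eta n i j = true` meaning `i ▷ j`. -/
def eta : ℕ → ℕ → ℕ → Bool
  | 0, i, j => eta0 i j
  | n+1, i, j =>
    if i ≤ 2^(n+3) ∧ j ≤ 2^(n+3) then eta n i j
    else if 2^(n+3) < i ∧ 2^(n+3) < j then eta n (i - 2^(n+3)) (j - 2^(n+3))
    else if i ≤ 2^(n+3) then decide ((i + j) % 2 = 0)
    else decide ((i + j) % 2 = 1)

/-!
Write `K = 2^(m+3)`. The tournament `η_{m+1}` consists of a copy of `η_m` on `[K]`, a shifted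
copy on `K + [K]`, and cross games won by the lower player exactly when the two players have
the same parity. Since `K` is even, a lower candidate `k` wins by winning its half and meeting
`K + k` in the final; an upper candidate `K + j` wins its half and meets the winner `1 + j % 2`
of the lower half, whose parity is opposite. The eight base cases are checked by explicit
brackets.
-/

section Knockout

variable (b b' : ℕ → ℕ → Bool)

theorem roundStep_length : ∀ l : List ℕ, (roundStep b l).length = (l.length + 1) / 2
  | [] => rfl
  | [_] => by simp [roundStep]
  | _ :: _ :: rest => by
      simp only [roundStep, List.length_cons, roundStep_length rest]
      omega

theorem mem_of_mem_roundStep : ∀ {l : List ℕ} {x : ℕ}, x ∈ roundStep b l → x ∈ l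
  | [], _, h | [_], _, h => h
  | a :: c :: rest, x, h => by
      rw [roundStep, List.mem_cons] at h
      rcases h with rfl | h
      · split <;> simp
      · simp [mem_of_mem_roundStep h]

theorem roundStep_append :
    ∀ l₁ l₂ : List ℕ, Even l₁.length → roundStep b (l₁ ++ l₂) = roundStep b l₁ ++ roundStep b l₂
  | [], _, _ => rfl
  | [_], _, h => by simp at h
  | _ :: _ :: rest, l₂, h => by
      simp only [List.cons_append, roundStep,
        roundStep_append rest l₂ (by simpa [Nat.even_add_one, parity_simps] using h)]

theorem roundStep_map (f : ℕ → ℕ) :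
    ∀ l : List ℕ, (∀ a ∈ l, ∀ c ∈ l, b' (f a) (f c) = b a c) →
      roundStep b' (l.map f) = (roundStep b l).map f
  | [], _ | [_], _ => rfl
  | a :: c :: rest, h => by
      have hrest : ∀ x ∈ rest, ∀ y ∈ rest, b' (f x) (f y) = b x y := fun x hx y hy =>
        h x (by simp [hx]) y (by simp [hy])
      simp only [List.map_cons, roundStep, roundStep_map f rest hrest,
        h a (by simp) c (by simp)]
      split <;> rfl

theorem iterate_roundStep_map (f : ℕ → ℕ) :
    ∀ (n : ℕ) (l : List ℕ), (∀ a ∈ l, ∀ c ∈ l, b' (f a) (f c) = b a c) →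
      (roundStep b')^[n] (l.map f) = ((roundStep b)^[n] l).map f
  | 0, _, _ => rfl
  | n + 1, l, h => by
      rw [Function.iterate_succ_apply, Function.iterate_succ_apply, roundStep_map b b' f l h]
      exact iterate_roundStep_map f n _ fun a ha c hc =>
        h a (mem_of_mem_roundStep b ha) c (mem_of_mem_roundStep b hc)

theorem iterate_roundStep_eq_singleton :
    ∀ (n : ℕ) (l : List ℕ), l.length = 2 ^ n → (roundStep b)^[n] l = [knockWinner n b l]
  | 0, [_], _ => rfl
  | n + 1, l, h => by
      have hlen : (roundStep b l).length = 2 ^ n := by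
        rw [roundStep_length, h, pow_succ]; omega
      rw [knockWinner, Function.iterate_succ_apply,
        iterate_roundStep_eq_singleton n _ hlen, knockWinner, List.headI]

theorem iterate_roundStep_append :
    ∀ (n : ℕ) (l₁ l₂ : List ℕ), l₁.length = 2 ^ n →
      (roundStep b)^[n] (l₁ ++ l₂) = (roundStep b)^[n] l₁ ++ (roundStep b)^[n] l₂
  | 0, _, _, _ => rfl
  | n + 1, l₁, l₂, h => by
      have hlen : (roundStep b l₁).length = 2 ^ n := by
        rw [roundStep_length, h, pow_succ]; omega
      simp only [Function.iterate_succ_apply]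
      rw [roundStep_append b l₁ l₂ (by rw [h, pow_succ]; exact even_two.mul_left _),
        iterate_roundStep_append n _ _ hlen]

theorem mem_of_mem_iterate_roundStep :
    ∀ {n : ℕ} {l : List ℕ} {x : ℕ}, x ∈ (roundStep b)^[n] l → x ∈ l
  | 0, _, _, h => h
  | _ + 1, _, _, h => mem_of_mem_roundStep b (mem_of_mem_iterate_roundStep h)

theorem knockWinner_mem {n : ℕ} {π : List ℕ} (hπ : π.length = 2 ^ n) :
    knockWinner n b π ∈ π :=
  mem_of_mem_iterate_roundStep b (by rw [iterate_roundStep_eq_singleton b n π hπ]; simp)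

theorem knockWinner_append {n : ℕ} {π₁ π₂ : List ℕ} (h₁ : π₁.length = 2 ^ n)
    (h₂ : π₂.length = 2 ^ n) :
    knockWinner (n + 1) b (π₁ ++ π₂) =
      if b (knockWinner n b π₁) (knockWinner n b π₂) then knockWinner n b π₁
      else knockWinner n b π₂ := by
  rw [knockWinner, Function.iterate_succ_apply', iterate_roundStep_append b n π₁ π₂ h₁,
    iterate_roundStep_eq_singleton b n π₁ h₁, iterate_roundStep_eq_singleton b n π₂ h₂]
  rfl

theorem knockWinner_map {n : ℕ} {π : List ℕ} (f : ℕ → ℕ) (hπ : π.length = 2 ^ n)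
    (hf : ∀ a ∈ π, ∀ c ∈ π, b' (f a) (f c) = b a c) :
    knockWinner n b' (π.map f) = f (knockWinner n b π) := by
  rw [knockWinner, iterate_roundStep_map b b' f n π hf, iterate_roundStep_eq_singleton b n π hπ]
  rfl

def IsPossibleWinner (n : ℕ) (l : List ℕ) (k : ℕ) : Prop :=
  ∃ π : List ℕ, π.Perm l ∧ knockWinner n b π = k

variable {b b'} {n : ℕ} {l l₁ l₂ : List ℕ} {k k₁ k₂ : ℕ}

theorem IsPossibleWinner.mem (h : IsPossibleWinner b n l k) (hl : l.length = 2 ^ n) : k ∈ l := by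
  obtain ⟨π, hπ, rfl⟩ := h
  exact hπ.subset (knockWinner_mem b (hπ.length_eq.trans hl))

theorem IsPossibleWinner.append (h₁ : IsPossibleWinner b n l₁ k₁) (h₂ : IsPossibleWinner b n l₂ k₂)
    (hl₁ : l₁.length = 2 ^ n) (hl₂ : l₂.length = 2 ^ n) :
    IsPossibleWinner b (n + 1) (l₁ ++ l₂) (if b k₁ k₂ then k₁ else k₂) := by
  obtain ⟨π₁, hπ₁, rfl⟩ := h₁
  obtain ⟨π₂, hπ₂, rfl⟩ := h₂
  exact ⟨π₁ ++ π₂, hπ₁.append hπ₂,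
    knockWinner_append b (hπ₁.length_eq.trans hl₁) (hπ₂.length_eq.trans hl₂)⟩

theorem IsPossibleWinner.map (f : ℕ → ℕ) (h : IsPossibleWinner b n l k) (hl : l.length = 2 ^ n)
    (hf : ∀ a ∈ l, ∀ c ∈ l, b' (f a) (f c) = b a c) :
    IsPossibleWinner b' n (l.map f) (f k) := by
  obtain ⟨π, hπ, rfl⟩ := h
  exact ⟨π.map f, hπ.map f, knockWinner_map b b' f (hπ.length_eq.trans hl)
    fun a ha c hc => hf a (hπ.subset ha) c (hπ.subset hc)⟩

theorem IsPossibleWinner.congr (h : IsPossibleWinner b n l k) (hl : l.length = 2 ^ n)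
    (hb : ∀ a ∈ l, ∀ c ∈ l, b' a c = b a c) : IsPossibleWinner b' n l k := by
  simpa using h.map id hl hb

end Knockout

section Eta

variable {m a c : ℕ}

theorem eta_succ_of_le (ha : a ≤ 2 ^ (m + 3)) (hc : c ≤ 2 ^ (m + 3)) :
    eta (m + 1) a c = eta m a c := by
  rw [eta, if_pos ⟨ha, hc⟩]

theorem eta_succ_add_add (ha : 0 < a) (hc : 0 < c) :
    eta (m + 1) (2 ^ (m + 3) + a) (2 ^ (m + 3) + c) = eta m a c := by
  rw [eta, if_neg (by omega), if_pos ⟨by omega, by omega⟩, Nat.add_sub_cancel_left,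
    Nat.add_sub_cancel_left]

theorem eta_succ_of_le_of_lt (ha : a ≤ 2 ^ (m + 3)) (hc : 2 ^ (m + 3) < c) :
    eta (m + 1) a c = decide ((a + c) % 2 = 0) := by
  rw [eta, if_neg (by omega), if_neg (by omega), if_pos ha]

theorem isPossibleWinner_eta_zero :
    ∀ k ∈ List.range' 1 (2 ^ 3), IsPossibleWinner (eta 0) 3 (List.range' 1 (2 ^ 3)) k := by
  intro k hk
  obtain ⟨hk₁, hk₈⟩ : 1 ≤ k ∧ k < 9 := by simpa using hk
  interval_cases k
  · exact ⟨[1, 2, 3, 4, 5, 6, 7, 8], by decide, by decide⟩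
  · exact ⟨[1, 3, 4, 5, 2, 6, 7, 8], by decide, by decide⟩
  · exact ⟨[1, 2, 4, 5, 3, 8, 6, 7], by decide, by decide⟩
  · exact ⟨[1, 2, 3, 6, 4, 8, 5, 7], by decide, by decide⟩
  · exact ⟨[1, 3, 4, 6, 2, 5, 7, 8], by decide, by decide⟩
  · exact ⟨[1, 2, 3, 4, 5, 8, 6, 7], by decide, by decide⟩
  · exact ⟨[1, 2, 3, 6, 4, 5, 7, 8], by decide, by decide⟩
  · exact ⟨[1, 3, 2, 8, 4, 6, 5, 7], by decide, by decide⟩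

theorem IsPossibleWinner.eta_succ {i j : ℕ}
    (hi : IsPossibleWinner (eta m) (m + 3) (List.range' 1 (2 ^ (m + 3))) i)
    (hj : IsPossibleWinner (eta m) (m + 3) (List.range' 1 (2 ^ (m + 3))) j) :
    IsPossibleWinner (eta (m + 1)) (m + 4) (List.range' 1 (2 ^ (m + 4)))
      (if eta (m + 1) i (2 ^ (m + 3) + j) then i else 2 ^ (m + 3) + j) := by
  set K := 2 ^ (m + 3)
  have hlen : (List.range' 1 K).length = 2 ^ (m + 3) := List.length_range'
  have hmem : ∀ a ∈ List.range' 1 K, 0 < a ∧ a ≤ K := fun a ha => by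
    have := List.mem_range'_1.1 ha; omega
  have lower : IsPossibleWinner (eta (m + 1)) (m + 3) (List.range' 1 K) i :=
    hi.congr hlen fun a ha c hc => eta_succ_of_le (hmem a ha).2 (hmem c hc).2
  have upper : IsPossibleWinner (eta (m + 1)) (m + 3) (List.range' (K + 1) K) (K + j) := by
    rw [← List.map_add_range']
    exact hj.map (K + ·) hlen fun a ha c hc => eta_succ_add_add (hmem a ha).1 (hmem c hc).1
  have hsplit : List.range' 1 K ++ List.range' (K + 1) K = List.range' 1 (2 ^ (m + 4)) := by
    rw [Nat.add_comm K 1, List.range'_append_1, pow_succ, mul_two]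
  rw [← hsplit]
  exact lower.append upper hlen (by rw [List.length_range'])

theorem isPossibleWinner_eta (m : ℕ) :
    ∀ k ∈ List.range' 1 (2 ^ (m + 3)),
      IsPossibleWinner (eta m) (m + 3) (List.range' 1 (2 ^ (m + 3))) k := by
  induction m with
  | zero => exact isPossibleWinner_eta_zero
  | succ m ih =>
    intro k hk
    set K := 2 ^ (m + 3)
    have hK : K % 2 = 0 := by simp [K, pow_succ]
    have hk' : 1 ≤ k ∧ k < 1 + 2 * K := by simpa [K, pow_succ, mul_comm] using hk
    have mem {i : ℕ} (h₁ : 1 ≤ i) (h₂ : i ≤ K) : i ∈ List.range' 1 K := by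
      rw [List.mem_range'_1]; omega
    by_cases hkK : k ≤ K
    · have h := (ih k (mem hk'.1 hkK)).eta_succ (ih k (mem hk'.1 hkK))
      rwa [eta_succ_of_le_of_lt hkK (by omega), if_pos (by simp; omega)] at h
    · have hj := ih (k - K) (mem (by omega) (by omega))
      have hl := ih (1 + (k - K) % 2) (mem (by omega) (by omega))
      have h := hl.eta_succ hj
      rwa [eta_succ_of_le_of_lt (by omega) (by omega), if_neg (by simp; omega),
        Nat.add_sub_cancel' (by omega)] at h

end Eta

/-- Theorem 1(2): for every `n ≥ 3`, the tournament `η_{n-3}` on `{1,…,2^n}` admits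
every candidate as a possible knockout winner: `w_n(η_{n-3}, Π(n)) = [2^n]`. -/
theorem stmt2 (n : ℕ) (hn : 3 ≤ n) :
    {w : ℕ | ∃ π : List ℕ, π.Perm (List.range' 1 (2^n)) ∧ knockWinner n (eta (n-3)) π = w}
      = {k : ℕ | k ∈ List.range' 1 (2^n)} := by
  obtain ⟨m, rfl⟩ : ∃ m, n = m + 3 := ⟨n - 3, by omega⟩
  ext w
  rw [Nat.add_sub_cancel]
  exact ⟨fun h => IsPossibleWinner.mem h List.length_range', isPossibleWinner_eta m w⟩
end

section
/- Fix n ≥ 1 and consider the 4-row voting profile (v₁, v₂, v₃, v₄) on [2^{n+3}] defined from the blocks A₁, B₁, A₂, B₂. Then: (a) for any two distinct candidates i, j lying both in [2^{n+2}] or both in [2^{n+3}]\[2^{n+2}], exactly two of the four rows rank i before j (so the pair is tied); (b) for i ∈ [2^{n+2}] and j ∈ [2^{n+3}]\[2^{n+2}], at least three of the four rows rank i before j if i+j is even, and at least three of the four rows rank j before i if i+j is odd. Hence this 4-row profile generates exactly the cross arrows of η_n between [2^{n+2}] and its complement, and no arrows within each half. -/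
/-- Number of rows (preference lists) of the voting profile `R` ranking `i` before `j`. -/
def prefCount (R : List (List ℕ)) (i j : ℕ) : ℕ :=
  (R.filter fun ρ => decide (ρ.idxOf i < ρ.idxOf j)).length

/-- `R` is a voting profile on the candidate set `{1,…,m}` generating the tournament `η`:
every row is a permutation of `{1,…,m}` and, for distinct candidates `i,j`, `i ▷ j`
holds iff strictly more rows rank `i` before `j` than rank `j` before `i`. -/
def Generates (R : List (List ℕ)) (m : ℕ) (η : ℕ → ℕ → Bool) : Prop :=
  (∀ ρ ∈ R, ρ.Perm (List.range' 1 m)) ∧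
  ∀ i ∈ List.range' 1 m, ∀ j ∈ List.range' 1 m, i ≠ j →
    (η i j = true ↔ prefCount R j i < prefCount R i j)

/-- The increasing list of the odd elements of `{1,…,2^(n+2)}`. -/
def Aodd (n : ℕ) : List ℕ := (List.range (2^(n+1))).map fun t => 2*t+1

/-- The increasing list of the even elements of `{1,…,2^(n+2)}`. -/
def Aeven (n : ℕ) : List ℕ := (List.range (2^(n+1))).map fun t => 2*t+2

/-- The increasing list of the odd elements of `{2^(n+2)+1,…,2^(n+3)}`. -/
def Bodd (n : ℕ) : List ℕ := (Aodd n).map (· + 2^(n+2))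

/-- The increasing list of the even elements of `{2^(n+2)+1,…,2^(n+3)}`. -/
def Beven (n : ℕ) : List ℕ := (Aeven n).map (· + 2^(n+2))

/-- The preference list `v₁ = (A₁, B₁, A₂, B₂)` on `{1,…,2^(n+3)}`. -/
def v1 (n : ℕ) : List ℕ := Aodd n ++ Bodd n ++ Aeven n ++ Beven n

/-- The preference list `v₂ = (Ā₂, B̄₂, Ā₁, B̄₁)` on `{1,…,2^(n+3)}`. -/
def v2 (n : ℕ) : List ℕ :=
  (Aeven n).reverse ++ (Beven n).reverse ++ (Aodd n).reverse ++ (Bodd n).reverse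

/-- The preference list `v₃ = (B₁, A₂, B₂, A₁)` on `{1,…,2^(n+3)}`. -/
def v3 (n : ℕ) : List ℕ := Bodd n ++ Aeven n ++ Beven n ++ Aodd n

/-- The preference list `v₄ = (B̄₂, Ā₁, B̄₁, Ā₂)` on `{1,…,2^(n+3)}`. -/
def v4 (n : ℕ) : List ℕ :=
  (Beven n).reverse ++ (Aodd n).reverse ++ (Bodd n).reverse ++ (Aeven n).reverse


/-!
Split the candidates into the blocks `A₁, B₁, A₂, B₂`. Every row lists the four blocks one after
another, each block increasing in `v₁, v₃` and decreasing in `v₂, v₄`. Hence two candidates of the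
same block are ordered one way by `v₁, v₃` and the other way by `v₂, v₄`, a tie, while candidates
of different blocks are compared exactly as their blocks are by the four block orders
`A₁B₁A₂B₂, A₂B₂A₁B₁, B₁A₂B₂A₁, B₂A₁B₁A₂`. On blocks this small profile is checked directly: it
generates the 4-cycle `A₁ → B₁ → A₂ → B₂ → A₁` and ties `A₁ ~ A₂`, `B₁ ~ B₂`.
-/

namespace List

variable {α ι : Type*} [BEq α] [LawfulBEq α]

theorem Pairwise.idxOf_lt_idxOf_iff {R : α → α → Prop} (hR : ∀ a b, R a b → ¬R b a)
    {l : List α} (hl : l.Pairwise R) {x y : α} (hx : x ∈ l) (hy : y ∈ l) :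
    l.idxOf x < l.idxOf y ↔ R x y := by
  have hx' := idxOf_lt_length_iff.2 hx
  have hy' := idxOf_lt_length_iff.2 hy
  have rel : ∀ {a b}, (ha : l.idxOf a < l.length) → (hb : l.idxOf b < l.length) →
      l.idxOf a < l.idxOf b → R a b := fun ha hb hab => by
    simpa only [getElem_idxOf] using pairwise_iff_getElem.1 hl _ _ ha hb hab
  refine ⟨rel hx' hy', fun hxy => ?_⟩
  rcases lt_trichotomy (l.idxOf x) (l.idxOf y) with h | h | h
  · exact h
  · rw [idxOf_inj hx] at h
    exact absurd (h ▸ hxy) (fun h' => hR _ _ h' h')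
  · exact absurd (rel hy' hx' h) (hR _ _ hxy)

variable {β : α → ι} {L : ι → List α}

theorem idxOf_flatMap_lt_iff_of_eq (hβ : ∀ c, ∀ x ∈ L c, β x = c) {o : List ι} {a : ι}
    {x y : α} (ho : a ∈ o) (hx : x ∈ L a) (hy : y ∈ L a) :
    (o.flatMap L).idxOf x < (o.flatMap L).idxOf y ↔ (L a).idxOf x < (L a).idxOf y := by
  induction o with
  | nil => simp at ho
  | cons c o ih =>
    rw [flatMap_cons]
    by_cases hc : c = a
    · subst hc
      rw [idxOf_append_of_mem hx, idxOf_append_of_mem hy]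
    rw [idxOf_append_of_notMem fun h => hc ((hβ _ _ h).symm.trans (hβ _ _ hx)),
      idxOf_append_of_notMem fun h => hc ((hβ _ _ h).symm.trans (hβ _ _ hy)),
      Nat.add_lt_add_iff_left]
    exact ih (mem_of_ne_of_mem (Ne.symm hc) ho)

variable [BEq ι] [LawfulBEq ι]

theorem idxOf_flatMap_lt_iff_of_ne (hβ : ∀ c, ∀ x ∈ L c, β x = c) {o : List ι} {x y : α}
    (ho : β x ∈ o) (ho' : β y ∈ o) (hxy : β x ≠ β y) (hx : x ∈ L (β x))
    (hy : y ∈ L (β y)) :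
    (o.flatMap L).idxOf x < (o.flatMap L).idxOf y ↔ o.idxOf (β x) < o.idxOf (β y) := by
  induction o with
  | nil => simp at ho
  | cons c o ih =>
    rw [flatMap_cons]
    by_cases hc : c = β x
    · subst hc
      rw [idxOf_append_of_mem hx, idxOf_append_of_notMem fun h => hxy (hβ _ _ h).symm,
        idxOf_cons_self, idxOf_cons_ne _ hxy]
      have := idxOf_lt_length_iff.2 hx
      omega
    by_cases hc' : c = β y
    · subst hc'
      rw [idxOf_append_of_mem hy, idxOf_append_of_notMem fun h => hc (hβ _ _ h).symm,
        idxOf_cons_self, idxOf_cons_ne _ hc]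
      have := idxOf_lt_length_iff.2 hy
      omega
    rw [idxOf_append_of_notMem fun h => hc (hβ _ _ h).symm,
      idxOf_append_of_notMem fun h => hc' (hβ _ _ h).symm, idxOf_cons_ne _ hc,
      idxOf_cons_ne _ hc', Nat.add_lt_add_iff_left, Nat.succ_lt_succ_iff]
    exact ih (mem_of_ne_of_mem (Ne.symm hc) ho) (mem_of_ne_of_mem (Ne.symm hc') ho')

end List

theorem prefCount_congr {R S : List (List ℕ)} {i j a b : ℕ}
    (h : List.Forall₂ (fun ρ σ => ρ.idxOf i < ρ.idxOf j ↔ σ.idxOf a < σ.idxOf b) R S) :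
    prefCount R i j = prefCount S a b := by
  induction h with
  | nil => rfl
  | cons hρσ _ ih =>
    simp only [prefCount, List.filter_cons, hρσ] at ih ⊢
    split_ifs <;> simp [ih]

theorem prefCount_cons (ρ : List ℕ) (R : List (List ℕ)) (i j : ℕ) :
    prefCount (ρ :: R) i j = (if ρ.idxOf i < ρ.idxOf j then 1 else 0) + prefCount R i j := by
  simp only [prefCount, List.filter_cons, decide_eq_true_eq]
  split_ifs <;> simp [Nat.add_comm]

/- Blocks are numbered `A₁ = 0`, `B₁ = 1`, `A₂ = 2`, `B₂ = 3`: `block n x % 2` records the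
half containing `x`, and `block n x / 2` whether `x` is even. -/
def block (n x : ℕ) : ℕ := 2 * ((x + 1) % 2) + if x ≤ 2^(n+2) then 0 else 1

def blocks (n : ℕ) : ℕ → List ℕ
  | 0 => Aodd n
  | 1 => Bodd n
  | 2 => Aeven n
  | 3 => Beven n
  | _ => []

theorem mem_map_range_two_mul_add {N c x : ℕ} :
    x ∈ (List.range N).map (fun t => 2 * t + c) ↔
      c ≤ x ∧ x < 2 * N + c ∧ x % 2 = c % 2 := by
  simp only [List.mem_map, List.mem_range]
  constructor
  · rintro ⟨t, ht, rfl⟩; omega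
  · intro h; exact ⟨(x - c) / 2, by omega, by omega⟩

theorem pairwise_map_range_two_mul_add (N c : ℕ) :
    ((List.range N).map (fun t => 2 * t + c)).Pairwise (· < ·) :=
  List.pairwise_map.2 (List.pairwise_lt_range.imp fun h => by omega)

theorem Bodd_eq (n : ℕ) :
    Bodd n = (List.range (2^(n+1))).map fun t => 2 * t + (1 + 2^(n+2)) := by
  simp only [Bodd, Aodd, List.map_map, Function.comp_def, Nat.add_assoc]

theorem Beven_eq (n : ℕ) :
    Beven n = (List.range (2^(n+1))).map fun t => 2 * t + (2 + 2^(n+2)) := by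
  simp only [Beven, Aeven, List.map_map, Function.comp_def, Nat.add_assoc]

theorem block_spec (n x : ℕ) :
    x ≤ 2^(n+2) ∧ block n x = 2 * ((x + 1) % 2) ∨
      2^(n+2) < x ∧ block n x = 2 * ((x + 1) % 2) + 1 := by
  unfold block; split_ifs <;> omega

theorem block_lt_four (n x : ℕ) : block n x < 4 := by
  have := block_spec n x; omega

theorem mem_blocks {n b x : ℕ} :
    x ∈ blocks n b ↔ x ∈ List.range' 1 (2^(n+3)) ∧ block n x = b := by
  have h2 : 2^(n+2) = 2 * 2^(n+1) := by ring
  have h3 : 2^(n+3) = 4 * 2^(n+1) := by ring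
  have := block_spec n x
  rw [List.mem_range'_1]
  match b with
  | 0 => simp only [blocks, Aodd, mem_map_range_two_mul_add]; omega
  | 1 => simp only [blocks, Bodd_eq, mem_map_range_two_mul_add]; omega
  | 2 => simp only [blocks, Aeven, mem_map_range_two_mul_add]; omega
  | 3 => simp only [blocks, Beven_eq, mem_map_range_two_mul_add]; omega
  | b + 4 => simp only [blocks, List.not_mem_nil, false_iff]; omega

theorem pairwise_blocks (n b : ℕ) : (blocks n b).Pairwise (· < ·) := by
  match b with
  | 0 => exact pairwise_map_range_two_mul_add _ _
  | 1 => rw [blocks, Bodd_eq]; exact pairwise_map_range_two_mul_add _ _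
  | 2 => exact pairwise_map_range_two_mul_add _ _
  | 3 => rw [blocks, Beven_eq]; exact pairwise_map_range_two_mul_add _ _
  | _ + 4 => exact List.Pairwise.nil

theorem v1_eq (n : ℕ) : v1 n = [0, 1, 2, 3].flatMap (blocks n) := by
  simp [v1, blocks]

theorem v2_eq (n : ℕ) : v2 n = [2, 3, 0, 1].flatMap fun b => (blocks n b).reverse := by
  simp [v2, blocks]

theorem v3_eq (n : ℕ) : v3 n = [1, 2, 3, 0].flatMap (blocks n) := by
  simp [v3, blocks]

theorem v4_eq (n : ℕ) : v4 n = [3, 0, 1, 2].flatMap fun b => (blocks n b).reverse := by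
  simp [v4, blocks]

def blockProfile : List (List ℕ) := [[0, 1, 2, 3], [2, 3, 0, 1], [1, 2, 3, 0], [3, 0, 1, 2]]

theorem prefCount_blockProfile : ∀ a < 4, ∀ b < 4, a ≠ b →
    prefCount blockProfile a b =
      if a % 2 = b % 2 then 2 else if (a / 2 + b / 2 + a % 2) % 2 = 0 then 3 else 1 := by
  decide

section Profile

variable {n x y : ℕ}

theorem block_eq_of_mem_blocks {c z : ℕ} (hz : z ∈ blocks n c) : block n z = c :=
  (mem_blocks.1 hz).2

theorem block_eq_of_mem_reverse_blocks {c z : ℕ} (hz : z ∈ (blocks n c).reverse) :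
    block n z = c :=
  block_eq_of_mem_blocks (List.mem_reverse.1 hz)

theorem mem_of_mem_blockProfile {a : ℕ} (ha : a < 4) : ∀ o ∈ blockProfile, a ∈ o := by
  interval_cases a <;> decide

theorem prefCount_profile_of_block_ne (hx : x ∈ List.range' 1 (2^(n+3)))
    (hy : y ∈ List.range' 1 (2^(n+3))) (hxy : block n x ≠ block n y) :
    prefCount [v1 n, v2 n, v3 n, v4 n] x y = prefCount blockProfile (block n x) (block n y) := by
  have hx' := mem_blocks.2 ⟨hx, rfl⟩
  have hy' := mem_blocks.2 ⟨hy, rfl⟩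
  have hmx := mem_of_mem_blockProfile (block_lt_four n x)
  have hmy := mem_of_mem_blockProfile (block_lt_four n y)
  have asc : ∀ o ∈ blockProfile,
      ((o.flatMap (blocks n)).idxOf x < (o.flatMap (blocks n)).idxOf y ↔
        o.idxOf (block n x) < o.idxOf (block n y)) := fun o ho =>
    List.idxOf_flatMap_lt_iff_of_ne (fun _ _ => block_eq_of_mem_blocks) (hmx o ho) (hmy o ho)
      hxy hx' hy'
  have desc : ∀ o ∈ blockProfile,
      ((o.flatMap fun b => (blocks n b).reverse).idxOf x <
        (o.flatMap fun b => (blocks n b).reverse).idxOf y ↔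
        o.idxOf (block n x) < o.idxOf (block n y)) := fun o ho =>
    List.idxOf_flatMap_lt_iff_of_ne (fun _ _ => block_eq_of_mem_reverse_blocks) (hmx o ho)
      (hmy o ho) hxy (List.mem_reverse.2 hx') (List.mem_reverse.2 hy')
  apply prefCount_congr
  simp only [v1_eq, v2_eq, v3_eq, v4_eq, blockProfile, List.forall₂_cons]
  exact ⟨asc _ (by simp [blockProfile]), desc _ (by simp [blockProfile]),
    asc _ (by simp [blockProfile]), desc _ (by simp [blockProfile]), List.Forall₂.nil⟩

theorem prefCount_profile_of_block_eq (hx : x ∈ List.range' 1 (2^(n+3)))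
    (hy : y ∈ List.range' 1 (2^(n+3))) (hb : block n x = block n y) (hxy : x ≠ y) :
    prefCount [v1 n, v2 n, v3 n, v4 n] x y = 2 := by
  have hx' := mem_blocks.2 ⟨hx, rfl⟩
  have hy' : y ∈ blocks n (block n x) := mem_blocks.2 ⟨hy, hb.symm⟩
  have hm := mem_of_mem_blockProfile (block_lt_four n x)
  have asc : ∀ o ∈ blockProfile,
      ((o.flatMap (blocks n)).idxOf x < (o.flatMap (blocks n)).idxOf y ↔ x < y) := fun o ho =>
    (List.idxOf_flatMap_lt_iff_of_eq (fun _ _ => block_eq_of_mem_blocks) (hm o ho) hx' hy').trans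
      ((pairwise_blocks n _).idxOf_lt_idxOf_iff (fun _ _ => lt_asymm) hx' hy')
  have desc : ∀ o ∈ blockProfile,
      ((o.flatMap fun b => (blocks n b).reverse).idxOf x <
        (o.flatMap fun b => (blocks n b).reverse).idxOf y ↔ y < x) := fun o ho =>
    (List.idxOf_flatMap_lt_iff_of_eq (fun _ _ => block_eq_of_mem_reverse_blocks) (hm o ho)
      (List.mem_reverse.2 hx') (List.mem_reverse.2 hy')).trans
      ((List.pairwise_reverse.2 (pairwise_blocks n _)).idxOf_lt_idxOf_iff (fun _ _ => lt_asymm)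
        (List.mem_reverse.2 hx') (List.mem_reverse.2 hy'))
  have hnil : prefCount [] x y = 0 := rfl
  simp only [prefCount_cons, hnil, v1_eq, v2_eq, v3_eq, v4_eq,
    asc [0, 1, 2, 3] (by simp [blockProfile]), desc [2, 3, 0, 1] (by simp [blockProfile]),
    asc [1, 2, 3, 0] (by simp [blockProfile]), desc [3, 0, 1, 2] (by simp [blockProfile])]
  split_ifs <;> omega

theorem prefCount_profile (hx : x ∈ List.range' 1 (2^(n+3)))
    (hy : y ∈ List.range' 1 (2^(n+3))) (hxy : x ≠ y) :
    prefCount [v1 n, v2 n, v3 n, v4 n] x y =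
      if (x ≤ 2^(n+2) ↔ y ≤ 2^(n+2)) then 2
      else if (x ≤ 2^(n+2) ↔ (x + y) % 2 = 0) then 3 else 1 := by
  have hbx := block_spec n x
  have hby := block_spec n y
  by_cases hb : block n x = block n y
  · rw [prefCount_profile_of_block_eq hx hy hb hxy, if_pos (by omega)]
  · rw [prefCount_profile_of_block_ne hx hy hb,
      prefCount_blockProfile _ (block_lt_four n x) _ (block_lt_four n y) hb]
    split_ifs <;> omega

end Profile

theorem stmt8_general (n : ℕ) :
    (∀ i ∈ List.range' 1 (2^(n+2)), ∀ j ∈ List.range' 1 (2^(n+2)), i ≠ j →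
      prefCount [v1 n, v2 n, v3 n, v4 n] i j = 2) ∧
    (∀ i ∈ List.range' (2^(n+2)+1) (2^(n+2)), ∀ j ∈ List.range' (2^(n+2)+1) (2^(n+2)),
      i ≠ j → prefCount [v1 n, v2 n, v3 n, v4 n] i j = 2) ∧
    (∀ i ∈ List.range' 1 (2^(n+2)), ∀ j ∈ List.range' (2^(n+2)+1) (2^(n+2)),
      ((i + j) % 2 = 0 → 3 ≤ prefCount [v1 n, v2 n, v3 n, v4 n] i j) ∧
      ((i + j) % 2 = 1 → 3 ≤ prefCount [v1 n, v2 n, v3 n, v4 n] j i)) ∧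
    (∀ i ∈ List.range' 1 (2^(n+3)), ∀ j ∈ List.range' 1 (2^(n+3)), i ≠ j →
      (prefCount [v1 n, v2 n, v3 n, v4 n] j i < prefCount [v1 n, v2 n, v3 n, v4 n] i j ↔
        ((i ≤ 2^(n+2) ∧ 2^(n+2) < j ∧ (i + j) % 2 = 0) ∨
         (j ≤ 2^(n+2) ∧ 2^(n+2) < i ∧ (i + j) % 2 = 1)))) := by
  have h3 : 2^(n+3) = 2 * 2^(n+2) := by ring
  have lower : ∀ {x}, x ∈ List.range' 1 (2^(n+2)) →
      x ∈ List.range' 1 (2^(n+3)) ∧ x ≤ 2^(n+2) := by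
    intro x hx; rw [List.mem_range'_1] at hx ⊢; omega
  have upper : ∀ {x}, x ∈ List.range' (2^(n+2)+1) (2^(n+2)) →
      x ∈ List.range' 1 (2^(n+3)) ∧ 2^(n+2) < x := by
    intro x hx; rw [List.mem_range'_1] at hx ⊢; omega
  refine ⟨fun i hi j hj hij => ?_, fun i hi j hj hij => ?_, fun i hi j hj => ?_,
    fun i hi j hj hij => ?_⟩
  · obtain ⟨hi, hi'⟩ := lower hi
    obtain ⟨hj, hj'⟩ := lower hj
    rw [prefCount_profile hi hj hij, if_pos (by omega)]
  · obtain ⟨hi, hi'⟩ := upper hi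
    obtain ⟨hj, hj'⟩ := upper hj
    rw [prefCount_profile hi hj hij, if_pos (by omega)]
  · obtain ⟨hi, hi'⟩ := lower hi
    obtain ⟨hj, hj'⟩ := upper hj
    rw [prefCount_profile hi hj (by omega), prefCount_profile hj hi (by omega)]
    constructor <;> intro <;> split_ifs <;> omega
  · rw [prefCount_profile hi hj hij, prefCount_profile hj hi (Ne.symm hij)]
    split_ifs <;> omega

/-- The four-voter profile `(v₁, v₂, v₃, v₄)` on `{1,…,2^(n+3)}` (for `n ≥ 1`):
(a) two distinct candidates in the same half are ranked `i` before `j` by exactly two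
of the four rows (a tie); (b) for `i` in the lower half and `j` in the upper half, at
least three rows rank `i` before `j` when `i+j` is even, and at least three rows rank
`j` before `i` when `i+j` is odd; hence the profile generates exactly the cross arrows
of `η_n` and no arrows within each half. -/
theorem stmt8 (n : ℕ) (hn : 1 ≤ n) :
    (∀ i ∈ List.range' 1 (2^(n+2)), ∀ j ∈ List.range' 1 (2^(n+2)), i ≠ j →
      prefCount [v1 n, v2 n, v3 n, v4 n] i j = 2) ∧
    (∀ i ∈ List.range' (2^(n+2)+1) (2^(n+2)), ∀ j ∈ List.range' (2^(n+2)+1) (2^(n+2)),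
      i ≠ j → prefCount [v1 n, v2 n, v3 n, v4 n] i j = 2) ∧
    (∀ i ∈ List.range' 1 (2^(n+2)), ∀ j ∈ List.range' (2^(n+2)+1) (2^(n+2)),
      ((i + j) % 2 = 0 → 3 ≤ prefCount [v1 n, v2 n, v3 n, v4 n] i j) ∧
      ((i + j) % 2 = 1 → 3 ≤ prefCount [v1 n, v2 n, v3 n, v4 n] j i)) ∧
    (∀ i ∈ List.range' 1 (2^(n+3)), ∀ j ∈ List.range' 1 (2^(n+3)), i ≠ j →
      (prefCount [v1 n, v2 n, v3 n, v4 n] j i < prefCount [v1 n, v2 n, v3 n, v4 n] i j ↔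
        ((i ≤ 2^(n+2) ∧ 2^(n+2) < j ∧ (i + j) % 2 = 0) ∨
         (j ≤ 2^(n+2) ∧ 2^(n+2) < i ∧ (i + j) % 2 = 1)))) :=
  stmt8_general n
end
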